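/- Suppose $X \in L^2$ is centred with variance $\sigma^2$, and $p = 1/2$. Then there is a numerical constant $c$ such that for all $n \geq 2$, $\mathbb{E}\left(\sup_{k \leq n} |\hat{S}_k|^2\right) \leq c\, \sigma^2\, n \log n$. -/

import Mathlib

/-!
For `p = 1/2` the walk satisfies `E[Ŝₙ₊₁ | ℱₙ] = (1 + 1/(2n)) Ŝₙ`, so `|Ŝ|` is a nonnegative
submartingale and Doob's `L²` inequality gives `E(sup_{k ≤ n} Ŝₖ²) ≤ 4 E(Ŝₙ²)`. Doob's inequality
comes from taking expectations in the elementary pathwise bound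
`Bₙ² ≤ 4 bₙ² - 4 ∑_{k < n} Bₖ (bₖ₊₁ - bₖ)` for the running maximum `B` of a sequence `b`: for a
submartingale `b` the sum has nonnegative expectation, since `Bₖ ≥ 0` is `ℱₖ`-measurable.
Finally `E(Ŝₙ₊₁²) = (1 + 1/n) E(Ŝₙ²) + σ²`, which solves to `E(Ŝₙ²) = σ² n Hₙ ≤ 3 σ² n log n`.
-/

open MeasureTheory ProbabilityTheory Filter Finset

theorem sq_partialSups_add_sq_le (b : ℕ → ℝ) (n : ℕ) :
    partialSups b n ^ 2 + (2 * b n - partialSups b n) ^ 2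
      ≤ 4 * b n ^ 2 - 4 * ∑ k ∈ range n, partialSups b k * (b (k + 1) - b k) := by
  induction n with
  | zero => simp only [partialSups_zero, range_zero, sum_empty]; nlinarith
  | succ n ih =>
    rw [sum_range_succ, ← Order.succ_eq_add_one, partialSups_succ, Order.succ_eq_add_one]
    rcases le_total (partialSups b n) (b (n + 1)) with h | h
    · rw [sup_of_le_right h]; nlinarith
    · rw [sup_of_le_left h]; nlinarith

namespace MeasureTheory

variable {Ω : Type*} {mΩ : MeasurableSpace Ω} {P : Measure Ω} {ℱ : Filtration ℕ mΩ}
  {f : ℕ → Ω → ℝ}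

theorem MemLp.partialSups {p : ENNReal} (hf : ∀ n, MemLp (f n) p P) (n : ℕ) :
    MemLp (partialSups f n) p P := by
  induction n with
  | zero => simpa using hf 0
  | succ n ih =>
    rw [← Order.succ_eq_add_one, partialSups_succ]
    exact ih.sup (hf _)

theorem StronglyAdapted.partialSups (hf : StronglyAdapted ℱ f) :
    StronglyAdapted ℱ (partialSups f) := by
  intro n
  induction n with
  | zero => simpa using hf 0
  | succ n ih =>
    change StronglyMeasurable[ℱ (n + 1)] (_root_.partialSups f (Order.succ n))
    rw [partialSups_succ]
    exact @StronglyMeasurable.sup _ _ _ _ (ℱ (n + 1)) _ _ _ (ih.mono (ℱ.mono n.le_succ)) (hf _)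

theorem submartingale_abs_of_abs_le_abs_condExp [IsFiniteMeasure P] (hadp : StronglyAdapted ℱ f)
    (hint : ∀ n, Integrable (f n) P) (hle : ∀ n, |f n| ≤ᵐ[P] |P[f (n + 1) | ℱ n]|) :
    Submartingale (fun n => |f n|) ℱ P :=
  submartingale_nat (fun n => continuous_abs.comp_stronglyMeasurable (hadp n))
    (fun n => (hint n).abs) fun n => (hle n).trans (abs_condExp_ae_le_condExp_abs _)

theorem Submartingale.integral_mul_le_integral_mul [IsFiniteMeasure P]
    (hf : Submartingale f ℱ P) {i j : ℕ} (hij : i ≤ j) {g : Ω → ℝ}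
    (hg : StronglyMeasurable[ℱ i] g) (hg_nonneg : 0 ≤ g)
    (hgi : Integrable (fun ω => g ω * f i ω) P) (hgj : Integrable (fun ω => g ω * f j ω) P) :
    ∫ ω, g ω * f i ω ∂P ≤ ∫ ω, g ω * f j ω ∂P := by
  have hpull : P[g * f j | ℱ i] =ᵐ[P] g * P[f j | ℱ i] :=
    condExp_mul_of_stronglyMeasurable_left hg hgj (hf.integrable j)
  calc ∫ ω, g ω * f i ω ∂P ≤ ∫ ω, (g * P[f j | ℱ i]) ω ∂P := by
        refine integral_mono_ae hgi (integrable_condExp.congr hpull) ?_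
        filter_upwards [hf.ae_le_condExp hij] with ω hω
        exact mul_le_mul_of_nonneg_left hω (hg_nonneg ω)
    _ = ∫ ω, (P[g * f j | ℱ i]) ω ∂P := (integral_congr_ae hpull).symm
    _ = ∫ ω, g ω * f j ω ∂P := integral_condExp (ℱ.le i)

theorem Submartingale.integral_sq_partialSups_le [IsFiniteMeasure P]
    (hf : Submartingale f ℱ P) (hf_nonneg : 0 ≤ f) (hL2 : ∀ n, MemLp (f n) 2 P) (n : ℕ) :
    ∫ ω, partialSups f n ω ^ 2 ∂P ≤ 4 * ∫ ω, f n ω ^ 2 ∂P := by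
  set B := fun k => partialSups f k
  have hB_L2 : ∀ k, MemLp (B k) 2 P := MemLp.partialSups hL2
  have hB_nonneg : ∀ k, 0 ≤ B k := fun k =>
    (hf_nonneg 0).trans (le_partialSups_of_le f k.zero_le)
  have hBf : ∀ k j, Integrable (fun ω => B k ω * f j ω) P := fun k j =>
    (hB_L2 k).integrable_mul (hL2 j)
  have hincr_int : ∀ k, Integrable (fun ω => B k ω * (f (k + 1) ω - f k ω)) P := fun k =>
    (hB_L2 k).integrable_mul ((hL2 (k + 1)).sub (hL2 k))
  have hincr_nonneg : ∀ k, 0 ≤ ∫ ω, B k ω * (f (k + 1) ω - f k ω) ∂P := fun k => by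
    simp only [mul_sub]
    rw [integral_sub (hBf k (k + 1)) (hBf k k), sub_nonneg]
    exact hf.integral_mul_le_integral_mul k.le_succ (hf.stronglyAdapted.partialSups k)
      (hB_nonneg k) (hBf k k) (hBf k (k + 1))
  have hpath : ∀ ω, B n ω ^ 2
      ≤ 4 * f n ω ^ 2 - 4 * ∑ k ∈ range n, B k ω * (f (k + 1) ω - f k ω) := fun ω => by
    have := sq_partialSups_add_sq_le (fun k => f k ω) n
    simp only [B, Pi.partialSups_apply]
    nlinarith [sq_nonneg (2 * f n ω - partialSups (fun k => f k ω) n)]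
  calc ∫ ω, B n ω ^ 2 ∂P
      ≤ ∫ ω, 4 * f n ω ^ 2 - 4 * ∑ k ∈ range n, B k ω * (f (k + 1) ω - f k ω) ∂P :=
        integral_mono (hB_L2 n).integrable_sq
          (((hL2 n).integrable_sq.const_mul 4).sub
            ((integrable_finsetSum _ fun k _ => hincr_int k).const_mul 4)) hpath
    _ = 4 * ∫ ω, f n ω ^ 2 ∂P - 4 * ∑ k ∈ range n, ∫ ω, B k ω * (f (k + 1) ω - f k ω) ∂P := by
        rw [integral_sub ((hL2 n).integrable_sq.const_mul 4)
            ((integrable_finsetSum _ fun k _ => hincr_int k).const_mul 4),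
          integral_const_mul, integral_const_mul, integral_finsetSum _ fun k _ => hincr_int k]
    _ ≤ 4 * ∫ ω, f n ω ^ 2 ∂P := by
        linarith [sum_nonneg fun k (_ : k ∈ range n) => hincr_nonneg k]

end MeasureTheory

theorem harmonic_le_three_mul_log {n : ℕ} (hn : 2 ≤ n) : (harmonic n : ℝ) ≤ 3 * Real.log n := by
  have hlog : Real.log 2 ≤ Real.log n := Real.log_le_log (by norm_num) (by exact_mod_cast hn)
  linarith [harmonic_le_one_add_log n, Real.log_two_gt_d9]

theorem biSup_Icc_sq_le_sq_partialSups_abs (s : ℕ → ℝ) (n : ℕ) :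
    ⨆ k ∈ Icc 1 n, s k ^ 2 ≤ partialSups (fun k => |s k|) n ^ 2 := by
  refine Real.iSup_le (fun k => Real.iSup_le (fun hk => ?_) (sq_nonneg _)) (sq_nonneg _)
  rw [← sq_abs]
  exact pow_le_pow_left₀ (abs_nonneg (s k))
    (le_partialSups_of_le (fun k => |s k|) (mem_Icc.mp hk).2) 2

namespace StepReinforced

variable {Ω : Type*} {mΩ : MeasurableSpace Ω} {P : Measure Ω} {ℱ : Filtration ℕ mΩ}
  {X : ℕ → Ω → ℝ} {p σ : ℝ}

def walk (X : ℕ → Ω → ℝ) (n : ℕ) (ω : Ω) : ℝ := ∑ j ∈ Icc 1 n, X j ω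

theorem walk_zero : walk X 0 = 0 := by
  funext ω
  simp [walk]

theorem walk_one : walk X 1 = X 1 := by
  funext ω
  simp [walk]

theorem walk_succ (n : ℕ) : walk X (n + 1) = walk X n + X (n + 1) := by
  funext ω
  exact sum_Icc_succ_top (by omega) _

theorem memLp_walk {q : ENNReal} (hX : ∀ n, MemLp (X n) q P) (n : ℕ) : MemLp (walk X n) q P :=
  memLp_finsetSum _ fun j _ => hX j

theorem integrable_walk (hX : ∀ n, Integrable (X n) P) (n : ℕ) : Integrable (walk X n) P :=
  integrable_finsetSum _ fun j _ => hX j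

theorem stronglyAdapted_walk (hX : StronglyAdapted ℱ X) : StronglyAdapted ℱ (walk X) := fun n =>
  Finset.stronglyMeasurable_fun_sum (Icc 1 n) fun j hj => (hX j).mono (ℱ.mono (mem_Icc.mp hj).2)

theorem condExp_walk_succ [IsFiniteMeasure P] (hint : ∀ n, Integrable (X n) P)
    (hX : StronglyAdapted ℱ X)
    (hcond : ∀ n : ℕ, 1 ≤ n → P[X (n + 1) | ℱ n] =ᵐ[P] fun ω => (p / n) * ∑ j ∈ Icc 1 n, X j ω)
    {n : ℕ} (hn : 1 ≤ n) :
    P[walk X (n + 1) | ℱ n] =ᵐ[P] fun ω => (1 + p / n) * walk X n ω := by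
  have hS : P[walk X n | ℱ n] = walk X n :=
    condExp_of_stronglyMeasurable (ℱ.le n) (stronglyAdapted_walk hX n) (integrable_walk hint n)
  rw [walk_succ]
  filter_upwards [condExp_add (integrable_walk hint n) (hint (n + 1)) (ℱ n), hcond n hn]
    with ω hadd hstep
  rw [hadd, Pi.add_apply, hS, hstep, walk]
  ring

theorem submartingale_abs_walk [IsFiniteMeasure P] (hp : 0 ≤ p) (hint : ∀ n, Integrable (X n) P)
    (hX : StronglyAdapted ℱ X)
    (hcond : ∀ n : ℕ, 1 ≤ n → P[X (n + 1) | ℱ n] =ᵐ[P] fun ω => (p / n) * ∑ j ∈ Icc 1 n, X j ω) :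
    Submartingale (fun n => |walk X n|) ℱ P := by
  refine submartingale_abs_of_abs_le_abs_condExp (stronglyAdapted_walk hX) (integrable_walk hint)
    fun n => ?_
  rcases Nat.eq_zero_or_pos n with rfl | hn
  · exact ae_of_all _ fun ω => by simp [walk_zero]
  filter_upwards [condExp_walk_succ hint hX hcond hn] with ω hω
  have hgrowth : 1 ≤ |1 + p / n| := by
    rw [abs_of_nonneg (by positivity)]
    exact le_add_of_nonneg_right (by positivity)
  rw [Pi.abs_apply, Pi.abs_apply, hω, abs_mul]
  exact le_mul_of_one_le_left (abs_nonneg _) hgrowth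

theorem integral_sq_increment [IsProbabilityMeasure P] (hL2 : ∀ n, MemLp (X n) 2 P)
    (hvar1 : ∫ ω, X 1 ω ^ 2 ∂P = σ ^ 2)
    (hcond2 : ∀ n : ℕ, 1 ≤ n → P[fun ω => X (n + 1) ω ^ 2 | ℱ n]
      =ᵐ[P] fun ω => p * (∑ j ∈ Icc 1 n, X j ω ^ 2) / n + (1 - p) * σ ^ 2)
    {n : ℕ} (hn : 1 ≤ n) : ∫ ω, X n ω ^ 2 ∂P = σ ^ 2 := by
  induction n using Nat.strong_induction_on with
  | _ n ih =>
  obtain rfl | ⟨m, hm, rfl⟩ : n = 1 ∨ ∃ m, 1 ≤ m ∧ n = m + 1 :=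
    (Nat.eq_or_lt_of_le hn).imp Eq.symm fun h => ⟨n - 1, by omega, by omega⟩
  · exact hvar1
  have hsum : ∑ j ∈ Icc 1 m, ∫ ω, X j ω ^ 2 ∂P = m * σ ^ 2 := by
    rw [sum_congr rfl fun j hj => ih j (Nat.lt_succ_of_le (mem_Icc.mp hj).2) (mem_Icc.mp hj).1]
    simp
  have hsq_sum : Integrable (fun ω => ∑ j ∈ Icc 1 m, X j ω ^ 2) P :=
    integrable_finsetSum _ fun j _ => (hL2 j).integrable_sq
  have hm0 : (m : ℝ) ≠ 0 := by positivity
  rw [← integral_condExp (ℱ.le m), integral_congr_ae (hcond2 m hm),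
    integral_add ((hsq_sum.const_mul p).div_const _) (integrable_const _),
    integral_div, integral_const_mul, integral_finsetSum _ fun j _ => (hL2 j).integrable_sq, hsum,
    integral_const, probReal_univ, one_smul]
  field_simp
  ring

theorem integral_walk_mul_succ [IsFiniteMeasure P] (hL2 : ∀ n, MemLp (X n) 2 P)
    (hX : StronglyAdapted ℱ X)
    (hcond : ∀ n : ℕ, 1 ≤ n → P[X (n + 1) | ℱ n] =ᵐ[P] fun ω => (p / n) * ∑ j ∈ Icc 1 n, X j ω)
    {n : ℕ} (hn : 1 ≤ n) :
    ∫ ω, walk X n ω * X (n + 1) ω ∂P = p / n * ∫ ω, walk X n ω ^ 2 ∂P := by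
  have hpull : P[fun ω => walk X n ω * X (n + 1) ω | ℱ n] =ᵐ[P] walk X n * P[X (n + 1) | ℱ n] :=
    condExp_mul_of_stronglyMeasurable_left (stronglyAdapted_walk hX n)
      ((memLp_walk hL2 n).integrable_mul (hL2 (n + 1))) ((hL2 _).integrable one_le_two)
  rw [← integral_condExp (ℱ.le n), ← integral_const_mul]
  refine integral_congr_ae ?_
  filter_upwards [hpull, hcond n hn] with ω hpull hstep
  rw [hpull, Pi.mul_apply, hstep, walk]
  ring

theorem integral_sq_walk_succ [IsProbabilityMeasure P] (hL2 : ∀ n, MemLp (X n) 2 P)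
    (hX : StronglyAdapted ℱ X) (hvar1 : ∫ ω, X 1 ω ^ 2 ∂P = σ ^ 2)
    (hcond : ∀ n : ℕ, 1 ≤ n → P[X (n + 1) | ℱ n] =ᵐ[P] fun ω => (p / n) * ∑ j ∈ Icc 1 n, X j ω)
    (hcond2 : ∀ n : ℕ, 1 ≤ n → P[fun ω => X (n + 1) ω ^ 2 | ℱ n]
      =ᵐ[P] fun ω => p * (∑ j ∈ Icc 1 n, X j ω ^ 2) / n + (1 - p) * σ ^ 2)
    {n : ℕ} (hn : 1 ≤ n) :
    ∫ ω, walk X (n + 1) ω ^ 2 ∂P = (1 + 2 * p / n) * ∫ ω, walk X n ω ^ 2 ∂P + σ ^ 2 := by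
  have hexpand : (fun ω => walk X (n + 1) ω ^ 2) = fun ω =>
      walk X n ω ^ 2 + 2 * (walk X n ω * X (n + 1) ω) + X (n + 1) ω ^ 2 := by
    funext ω
    rw [walk_succ, Pi.add_apply]
    ring
  have hS2 : Integrable (fun ω => walk X n ω ^ 2) P := (memLp_walk hL2 n).integrable_sq
  have hSX : Integrable (fun ω => 2 * (walk X n ω * X (n + 1) ω)) P :=
    ((memLp_walk hL2 n).integrable_mul (hL2 (n + 1))).const_mul 2
  have hS2SX : Integrable (fun ω => walk X n ω ^ 2 + 2 * (walk X n ω * X (n + 1) ω)) P :=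
    hS2.add hSX
  rw [hexpand, integral_add hS2SX (hL2 (n + 1)).integrable_sq, integral_add hS2 hSX,
    integral_const_mul, integral_walk_mul_succ hL2 hX hcond hn,
    integral_sq_increment hL2 hvar1 hcond2 n.succ_pos]
  ring

theorem integral_sq_walk_of_half [IsProbabilityMeasure P] (hL2 : ∀ n, MemLp (X n) 2 P)
    (hX : StronglyAdapted ℱ X) (hvar1 : ∫ ω, X 1 ω ^ 2 ∂P = σ ^ 2)
    (hcond : ∀ n : ℕ, 1 ≤ n →
      P[X (n + 1) | ℱ n] =ᵐ[P] fun ω => (1 / 2 / n) * ∑ j ∈ Icc 1 n, X j ω)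
    (hcond2 : ∀ n : ℕ, 1 ≤ n → P[fun ω => X (n + 1) ω ^ 2 | ℱ n]
      =ᵐ[P] fun ω => 1 / 2 * (∑ j ∈ Icc 1 n, X j ω ^ 2) / n + (1 - 1 / 2) * σ ^ 2)
    {n : ℕ} (hn : 1 ≤ n) : ∫ ω, walk X n ω ^ 2 ∂P = σ ^ 2 * n * harmonic n := by
  induction n, hn using Nat.le_induction with
  | base => simp [walk_one, hvar1]
  | succ n hn ih =>
    rw [integral_sq_walk_succ hL2 hX hvar1 hcond hcond2 hn, ih, harmonic_succ]
    have hn0 : (n : ℝ) ≠ 0 := by positivity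
    push_cast
    field_simp

end StepReinforced

open StepReinforced

theorem reinforced_maximal_inequality_critical_general
    {Ω : Type*} {mΩ : MeasurableSpace Ω} (P : Measure Ω) [IsProbabilityMeasure P]
    (ℱ : Filtration ℕ mΩ)
    (σ : ℝ) (p : ℝ) (hp : p = 1 / 2)
    (hatX : ℕ → Ω → ℝ)
    (hL2 : ∀ n, MemLp (hatX n) 2 P)
    (hadapt : StronglyAdapted ℱ hatX)
    (hvar1 : ∫ ω, (hatX 1 ω) ^ 2 ∂P = σ ^ 2)
    (hcond : ∀ n : ℕ, 1 ≤ n →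
      P[hatX (n + 1) | ℱ n]
        =ᵐ[P] fun ω => (p / n) * ∑ j ∈ Finset.Icc 1 n, hatX j ω)
    (hcond2 : ∀ n : ℕ, 1 ≤ n →
      P[fun ω => (hatX (n + 1) ω) ^ 2 | ℱ n]
        =ᵐ[P] fun ω => p * (∑ j ∈ Finset.Icc 1 n, (hatX j ω) ^ 2) / n + (1 - p) * σ ^ 2) :
    ∃ c : ℝ, 0 < c ∧ ∀ n : ℕ, 2 ≤ n →
      ∫ ω, (⨆ k ∈ Finset.Icc 1 n, (∑ j ∈ Finset.Icc 1 k, hatX j ω) ^ 2) ∂P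
        ≤ c * σ ^ 2 * n * Real.log n := by
  subst hp
  have hsub := submartingale_abs_walk (by norm_num) (fun n => (hL2 n).integrable one_le_two)
    hadapt hcond
  have habsL2 : ∀ k, MemLp |walk hatX k| 2 P := fun k => (memLp_walk hL2 k).abs
  refine ⟨12, by norm_num, fun n hn => ?_⟩
  calc ∫ ω, (⨆ k ∈ Icc 1 n, walk hatX k ω ^ 2) ∂P
      ≤ ∫ ω, partialSups (fun k => |walk hatX k|) n ω ^ 2 ∂P := by
        refine integral_mono_of_nonneg
          (ae_of_all _ fun ω => Real.iSup_nonneg fun k => Real.iSup_nonneg fun _ => sq_nonneg _)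
          (MemLp.partialSups habsL2 n).integrable_sq (ae_of_all _ fun ω => ?_)
        beta_reduce
        rw [Pi.partialSups_apply]
        exact biSup_Icc_sq_le_sq_partialSups_abs (fun k => walk hatX k ω) n
    _ ≤ 4 * ∫ ω, |walk hatX n ω| ^ 2 ∂P :=
        hsub.integral_sq_partialSups_le (fun k ω => abs_nonneg _) habsL2 n
    _ = 4 * (σ ^ 2 * n * harmonic n) := by
        simp_rw [sq_abs]
        rw [integral_sq_walk_of_half hL2 hadapt hvar1 hcond hcond2 (by omega)]
    _ ≤ 12 * σ ^ 2 * n * Real.log n := by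
        have := harmonic_le_three_mul_log hn
        have : 0 ≤ σ ^ 2 * n := by positivity
        nlinarith

/-- maximal inequality in the critical regime `p = 1/2`:
`E(sup_{k ≤ n} |Ŝₖ|²) ≤ c σ² n log n` for a numerical constant `c`. -/
theorem reinforced_maximal_inequality_critical
    {Ω : Type*} {mΩ : MeasurableSpace Ω} (P : Measure Ω) [IsProbabilityMeasure P]
    (ℱ : Filtration ℕ mΩ)
    (σ : ℝ) (p : ℝ) (hp : p = 1 / 2)
    (hatX : ℕ → Ω → ℝ)
    (hL2 : ∀ n, MemLp (hatX n) 2 P)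
    (hadapt : StronglyAdapted ℱ hatX)
    (hcent : ∫ ω, hatX 1 ω ∂P = 0)
    (hvar1 : ∫ ω, (hatX 1 ω) ^ 2 ∂P = σ ^ 2)
    (hcond : ∀ n : ℕ, 1 ≤ n →
      P[hatX (n + 1) | ℱ n]
        =ᵐ[P] fun ω => (p / n) * ∑ j ∈ Finset.Icc 1 n, hatX j ω)
    (hcond2 : ∀ n : ℕ, 1 ≤ n →
      P[fun ω => (hatX (n + 1) ω) ^ 2 | ℱ n]
        =ᵐ[P] fun ω => p * (∑ j ∈ Finset.Icc 1 n, (hatX j ω) ^ 2) / n + (1 - p) * σ ^ 2) :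
    ∃ c : ℝ, 0 < c ∧ ∀ n : ℕ, 2 ≤ n →
      ∫ ω, (⨆ k ∈ Finset.Icc 1 n, (∑ j ∈ Finset.Icc 1 k, hatX j ω) ^ 2) ∂P
        ≤ c * σ ^ 2 * n * Real.log n :=
  reinforced_maximal_inequality_critical_general P ℱ σ p hp hatX hL2 hadapt hvar1 hcond hcond2
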